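/- The function λ_eff is continuous on (0, ∞), satisfies λ_eff(x) → 0 as x → 0⁺, and satisfies λ_eff(x) → λ_max = η₀ · C^stb(N−1)/C^stb(N) as x → ∞. -/
import Mathlib


open Finset

/-- `Cstb J η ν m` is the normalisation constant `C^stb(m)` of the stability network:
the sum over tuples `(n₁,…,n_J)` with `n₁+⋯+n_J = m` of `∏_j ∏_{i=1}^{n_j} η_j/ν_j(i)`. -/
noncomputable def Cstb (J : ℕ) (η : Fin J → ℝ) (ν : Fin J → ℕ → ℝ) (m : ℕ) : ℝ :=
  ∑ n ∈ Finset.Nat.antidiagonalTuple J m,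
    ∏ j, ∏ i ∈ Finset.range (n j), η j / ν j (i + 1)

/-- The effective arrival rate of the lost-customers modification with arrival rate `x`. -/
noncomputable def lamEff (J N : ℕ) (η0 : ℝ) (η : Fin J → ℝ) (ν : Fin J → ℕ → ℝ)
    (x : ℝ) : ℝ :=
  x * (1 - Cstb J η ν N /
    ∑ n0 ∈ Finset.range (N + 1), (η0 / x) ^ n0 * Cstb J η ν (N - n0))

lemma Cstb_pos (J : ℕ) (hJ : 1 ≤ J) (η : Fin J → ℝ) (ν : Fin J → ℕ → ℝ)
    (hη : ∀ j, 0 < η j) (hν : ∀ j i, 1 ≤ i → 0 < ν j i) (m : ℕ) :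
    0 < Cstb J η ν m := by
  apply Finset.sum_pos
  · intro n _
    apply Finset.prod_pos
    intro j _
    apply Finset.prod_pos
    intro i _
    exact div_pos (hη j) (hν j (i + 1) (Nat.le_add_left 1 i))
  · refine ⟨Pi.single ⟨0, hJ⟩ m, ?_⟩
    rw [Finset.Nat.mem_antidiagonalTuple]
    simp

/-- `λ_eff` is continuous on `(0,∞)`, tends to `0` as `x → 0⁺`, and tends to
`λ_max = η₀ · C^stb(N−1)/C^stb(N)` as `x → ∞`. -/
theorem lamEff_continuous_and_limits
    (J N : ℕ) (hJ : 1 ≤ J) (hN : 1 ≤ N)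
    (η0 : ℝ) (hη0 : 0 < η0)
    (η : Fin J → ℝ) (hη : ∀ j, 0 < η j)
    (ν : Fin J → ℕ → ℝ) (hν : ∀ j i, 1 ≤ i → 0 < ν j i) :
    ContinuousOn (lamEff J N η0 η ν) (Set.Ioi 0) ∧
    Filter.Tendsto (lamEff J N η0 η ν) (nhdsWithin 0 (Set.Ioi 0)) (nhds 0) ∧
    Filter.Tendsto (lamEff J N η0 η ν) Filter.atTop
      (nhds (η0 * Cstb J η ν (N - 1) / Cstb J η ν N)) := by
  set C : ℕ → ℝ := Cstb J η ν with hC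
  have hCpos : ∀ m, 0 < C m := Cstb_pos J hJ η ν hη hν
  set S : ℝ → ℝ := fun x => ∑ n0 ∈ Finset.range (N + 1), (η0 / x) ^ n0 * C (N - n0)
    with hSdef
  set R : ℝ → ℝ := fun x => ∑ n0 ∈ Finset.range N, (η0 / x) ^ n0 * C (N - 1 - n0)
    with hRdef
  have hterm_nonneg : ∀ x : ℝ, 0 < x → ∀ n0 : ℕ, 0 ≤ (η0 / x) ^ n0 * C (N - n0) := by
    intro x hx n0
    exact mul_nonneg (pow_nonneg (div_nonneg hη0.le hx.le) n0) (hCpos _).le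
  have hSle : ∀ x : ℝ, 0 < x → C N ≤ S x := by
    intro x hx
    have h0 : (0 : ℕ) ∈ Finset.range (N + 1) := Finset.mem_range.2 (Nat.succ_pos N)
    have := Finset.single_le_sum (f := fun n0 => (η0 / x) ^ n0 * C (N - n0))
      (fun i _ => hterm_nonneg x hx i) h0
    simpa using this
  have hSpos : ∀ x : ℝ, 0 < x → 0 < S x := fun x hx => lt_of_lt_of_le (hCpos N) (hSle x hx)
  have hlam : ∀ x : ℝ, lamEff J N η0 η ν x = x * (1 - C N / S x) := fun x => rfl
  -- key algebraic identity on (0,∞)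
  have hSsplit : ∀ x : ℝ, S x = (η0 / x) * R x + C N := by
    intro x
    rw [hSdef, hRdef]
    simp only
    rw [Finset.sum_range_succ']
    simp only [pow_zero, one_mul, Nat.sub_zero, Finset.mul_sum]
    congr 1
    apply Finset.sum_congr rfl
    intro n0 _
    have : N - (n0 + 1) = N - 1 - n0 := by omega
    rw [this, pow_succ]
    ring
  have hkey : ∀ x : ℝ, 0 < x → lamEff J N η0 η ν x = η0 * R x / S x := by
    intro x hx
    rw [hlam x]
    have hSne : S x ≠ 0 := (hSpos x hx).ne'
    have h1 : 1 - C N / S x = (S x - C N) / S x := by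
      rw [sub_div, div_self hSne]
    rw [h1, show S x - C N = η0 / x * R x by rw [hSsplit x]; ring]
    field_simp
  refine ⟨?_, ?_, ?_⟩
  · -- continuity
    have hScont : ContinuousOn S (Set.Ioi 0) := by
      apply continuousOn_finset_sum
      intro n0 _
      exact ((continuousOn_const.div continuousOn_id
        (fun x hx => ne_of_gt hx)).pow n0).mul continuousOn_const
    exact continuousOn_id.mul (continuousOn_const.sub
      (continuousOn_const.div hScont (fun x hx => (hSpos x hx).ne')))
  · -- limit at 0⁺
    have hbound1 : ∀ᶠ x in nhdsWithin (0:ℝ) (Set.Ioi 0),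
        (0:ℝ) ≤ lamEff J N η0 η ν x := by
      filter_upwards [self_mem_nhdsWithin] with x hx
      have hx : (0:ℝ) < x := hx
      rw [hlam]
      apply mul_nonneg hx.le
      have : C N / S x ≤ 1 := (div_le_one (hSpos x hx)).2 (hSle x hx)
      linarith
    have hbound2 : ∀ᶠ x in nhdsWithin (0:ℝ) (Set.Ioi 0),
        lamEff J N η0 η ν x ≤ x := by
      filter_upwards [self_mem_nhdsWithin] with x hx
      have hx : (0:ℝ) < x := hx
      rw [hlam]
      apply mul_le_of_le_one_right hx.le
      have : 0 ≤ C N / S x := div_nonneg (hCpos N).le (hSpos x hx).le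
      linarith
    exact tendsto_of_tendsto_of_tendsto_of_le_of_le' tendsto_const_nhds
      (Filter.tendsto_id.mono_left nhdsWithin_le_nhds) hbound1 hbound2
  · -- limit at ∞
    have hy : Filter.Tendsto (fun x : ℝ => η0 / x) Filter.atTop (nhds 0) :=
      tendsto_const_nhds.div_atTop Filter.tendsto_id
    have hRlim : Filter.Tendsto R Filter.atTop (nhds (C (N - 1))) := by
      have h1 : Filter.Tendsto R Filter.atTop
          (nhds (∑ n0 ∈ Finset.range N, (0:ℝ) ^ n0 * C (N - 1 - n0))) :=
        tendsto_finset_sum _ fun n0 _ => (hy.pow n0).mul tendsto_const_nhds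
      have h2 : ∑ n0 ∈ Finset.range N, (0:ℝ) ^ n0 * C (N - 1 - n0) = C (N - 1) := by
        rw [Finset.sum_eq_single_of_mem 0 (Finset.mem_range.2 hN)]
        · simp
        · intro i _ hi; simp [zero_pow hi]
      rwa [h2] at h1
    have hSlim : Filter.Tendsto S Filter.atTop (nhds (C N)) := by
      have h1 : Filter.Tendsto S Filter.atTop
          (nhds (∑ n0 ∈ Finset.range (N + 1), (0:ℝ) ^ n0 * C (N - n0))) :=
        tendsto_finset_sum _ fun n0 _ => (hy.pow n0).mul tendsto_const_nhds
      have h2 : ∑ n0 ∈ Finset.range (N + 1), (0:ℝ) ^ n0 * C (N - n0) = C N := by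
        rw [Finset.sum_eq_single_of_mem 0 (Finset.mem_range.2 (Nat.succ_pos N))]
        · simp
        · intro i _ hi; simp [zero_pow hi]
      rwa [h2] at h1
    have hmain : Filter.Tendsto (fun x => η0 * R x / S x) Filter.atTop
        (nhds (η0 * C (N - 1) / C N)) :=
      (tendsto_const_nhds.mul hRlim).div hSlim (hCpos N).ne'
    apply hmain.congr'
    filter_upwards [Filter.eventually_gt_atTop (0:ℝ)] with x hx
    exact (hkey x hx).symm
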